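/- Let T be a triangulated category and S a thick subcategory. Then the following are equivalent: (1) the sequence S → T → T/S (inclusion followed by the Verdier quotient functor) is a localization sequence; (2) the inclusion functor S → T has a right adjoint; (3) the quotient functor T → T/S has a right adjoint. -/

import Mathlib

/-!
Everything turns on the existence, for every object `X`, of a distinguished triangle
`A ⟶ X ⟶ B ⟶ A⟦1⟧` with `A ∈ S` and `B ∈ S^⊥`. Such a triangle makes `A ⟶ X` a coreflection of
`X` into `S`, and conversely the cone of the counit of a coreflection lies in `S^⊥`. Maps into an
object of `S^⊥` are unchanged by the Verdier quotient `Q`, while `X ⟶ B` becomes invertible in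
`T/S`, so `B` is the value at `Q X` of a right adjoint of `Q`. Conversely a right adjoint `R` of `Q`
takes values in `S^⊥` because `Q` kills `S`; hence its counit is invertible, the unit
`X ⟶ R (Q X)` is inverted by `Q`, and its fibre, being killed by `Q`, lies in the thick
subcategory `S`. The other conditions of a localization sequence are then automatic.
-/

open CategoryTheory CategoryTheory.Limits CategoryTheory.Pretriangulated Opposite

universe v u

namespace Krause

variable (A : Type u) [Category.{v} A] [Abelian A]

/-- The homotopy category of unbounded cochain complexes. -/
abbrev HtpyCat := HomotopyCategory A (ComplexShape.up ℤ)

variable [HasColimits A]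

/-- A locally noetherian Grothendieck category: an abelian category with (small) colimits,
exact filtered colimits (AB5) and a generating set of noetherian objects. -/
class LocallyNoetherianGrothendieck : Prop where
  ab5 : ∀ (J : Type v) [SmallCategory J] [IsFiltered J],
    PreservesFiniteLimits (colim (J := J) (C := A))
  exists_noetherian_generators : ∃ G : Set A, (∀ X ∈ G, IsNoetherianObject X) ∧
    ∀ X : A, ∃ (ι : Type v) (g : ι → A), (∀ i, g i ∈ G) ∧ ∃ (π : (∐ g) ⟶ X), Epi π

variable {A}

/-- A complex with injective components. -/
def DegreewiseInjective (X : HtpyCat A) : Prop := ∀ n : ℤ, Injective (X.as.X n)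

/-- An acyclic complex. -/
def IsAcyclicK (X : HtpyCat A) : Prop :=
  ∀ n : ℤ, IsZero ((HomotopyCategory.homologyFunctor A (ComplexShape.up ℤ) n).obj X)

/-- A compact object: `Hom(X, -)` preserves coproducts. -/
def IsCompactObj {C : Type*} [Category.{v} C] (X : C) : Prop :=
  ∀ ι : Type v, Nonempty (PreservesColimitsOfShape (Discrete ι) (coyoneda.obj (op X)))

/-- compactly generated triangulated category -/
def IsCompactlyGenerated (T : Type*) [Category.{v} T] [HasZeroMorphisms T] [HasShift T ℤ] : Prop :=
  ∃ G : Set T, (∀ X ∈ G, IsCompactObj X) ∧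
    ∀ Y : T, (∀ X ∈ G, ∀ n : ℤ, ∀ f : X ⟶ (Y⟦n⟧), f = 0) → IsZero Y

/-- The homotopy category of complexes of injectives, `K(Inj A)`. -/
abbrev KInj := ObjectProperty.FullSubcategory (DegreewiseInjective (A := A))

/-- The stable derived category `S(A)`: acyclic complexes of injectives. -/
abbrev SCat := ObjectProperty.FullSubcategory (fun X : HtpyCat A => DegreewiseInjective X ∧ IsAcyclicK X)

variable (A) in
/-- The canonical functor `Q : K(Inj A) ⥤ D(A)`. -/
noncomputable def QInj [HasDerivedCategory.{v} A] : KInj (A := A) ⥤ DerivedCategory A :=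
  ObjectProperty.ι _ ⋙ DerivedCategory.Qh

variable (A) in
/-- The inclusion `I : S(A) ⥤ K(Inj A)`. -/
def IInc : SCat (A := A) ⥤ KInj (A := A) :=
  ObjectProperty.lift _ (ObjectProperty.ι _) (fun X => X.2.1)

end Krause

namespace Krause

/-- The data exhibiting `(F, G)` as a localization sequence. -/
structure LocalizationSequence {T₁ : Type*} {T₂ : Type*} {T₃ : Type*}
    [Category T₁] [Category T₂] [Category T₃] (F : T₁ ⥤ T₂) (G : T₂ ⥤ T₃) where
  /-- a right adjoint of `F` -/
  Fρ : T₂ ⥤ T₁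
  adjF : F ⊣ Fρ
  FρF_iso : F ⋙ Fρ ≅ 𝟭 T₁
  /-- a right adjoint of `G` -/
  Gρ : T₃ ⥤ T₂
  adjG : G ⊣ Gρ
  GGρ_iso : Gρ ⋙ G ≅ 𝟭 T₃
  zero_iff : ∀ X : T₂, IsZero (G.obj X) ↔ ∃ Y : T₁, Nonempty (X ≅ F.obj Y)

/-- `(F, G)` is a localization sequence. -/
def IsLocalizationSequence {T₁ : Type*} {T₂ : Type*} {T₃ : Type*}
    [Category T₁] [Category T₂] [Category T₃] (F : T₁ ⥤ T₂) (G : T₂ ⥤ T₃) : Prop :=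
  Nonempty (LocalizationSequence F G)

/-- The data exhibiting `(F, G)` as a colocalization sequence (a localization sequence
of the opposite functors). -/
structure ColocalizationSequence {T₁ : Type*} {T₂ : Type*} {T₃ : Type*}
    [Category T₁] [Category T₂] [Category T₃] (F : T₁ ⥤ T₂) (G : T₂ ⥤ T₃) where
  /-- a left adjoint of `F` -/
  Fl : T₂ ⥤ T₁
  adjF : Fl ⊣ F
  FFl_iso : F ⋙ Fl ≅ 𝟭 T₁
  /-- a left adjoint of `G` -/
  Gl : T₃ ⥤ T₂
  adjG : Gl ⊣ G
  GlG_iso : Gl ⋙ G ≅ 𝟭 T₃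
  zero_iff : ∀ X : T₂, IsZero (G.obj X) ↔ ∃ Y : T₁, Nonempty (X ≅ F.obj Y)

/-- `(F, G)` is a colocalization sequence. -/
def IsColocalizationSequence {T₁ : Type*} {T₂ : Type*} {T₃ : Type*}
    [Category T₁] [Category T₂] [Category T₃] (F : T₁ ⥤ T₂) (G : T₂ ⥤ T₃) : Prop :=
  Nonempty (ColocalizationSequence F G)

end Krause

namespace Krause

namespace Triangulated

/-- A triangulated subcategory (the Mathlib notion `Triangulated.Subcategory` of the older library). -/
structure Subcategory (C : Type*) [Category C] [HasZeroObject C] [HasShift C ℤ] [Preadditive C]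
    [∀ n : ℤ, (shiftFunctor C n).Additive] [Pretriangulated C] where
  P : C → Prop
  zero' : ∃ (Z : C) (_ : IsZero Z), P Z
  shift (X : C) (n : ℤ) : P X → P (X⟦n⟧)
  ext₂' (T : Triangle C) (_ : T ∈ distTriang C) : P T.obj₁ → P T.obj₃ →
    ObjectProperty.isoClosure P T.obj₂

/-- The class of morphisms whose cone is in the subcategory. -/
def Subcategory.W {C : Type*} [Category C] [HasZeroObject C] [HasShift C ℤ] [Preadditive C]
    [∀ n : ℤ, (shiftFunctor C n).Additive] [Pretriangulated C] (S : Subcategory C) :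
    MorphismProperty C :=
  fun X Y f => ∃ (Z : C) (g : Y ⟶ Z) (h : Z ⟶ X⟦(1 : ℤ)⟧)
    (_ : Triangle.mk f g h ∈ distTriang C), S.P Z

end Triangulated

end Krause

namespace CategoryTheory

variable {C D : Type*} [Category C] [Category D]

lemma Functor.isIso_of_bijective_comp (L : C ⥤ D) [L.EssSurj] {Y Y' : D} (f : Y ⟶ Y')
    (h : ∀ X, Function.Bijective fun g : L.obj X ⟶ Y => g ≫ f) : IsIso f := by
  refine isIso_of_yoneda_map_bijective f fun Z => ?_
  let e := L.objObjPreimageIso Z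
  convert e.homFromEquiv.bijective.comp ((h _).comp e.homFromEquiv.symm.bijective) using 1
  funext x
  simp

lemma Adjunction.isIso_counit_app_of_map_bijective {L : C ⥤ D} {R : D ⥤ C} [L.EssSurj]
    (adj : L ⊣ R) {Y : D} (h : ∀ X, Function.Bijective (L.map : (X ⟶ R.obj Y) → _)) :
    IsIso (adj.counit.app Y) := by
  refine L.isIso_of_bijective_comp _ fun X => (Function.Bijective.of_comp_iff _ (h X)).1 ?_
  have : (fun g => g ≫ adj.counit.app Y) ∘ L.map = (adj.homEquiv X Y).symm := by
    funext g
    simp [Adjunction.homEquiv_counit]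
  exact this ▸ (adj.homEquiv X Y).symm.bijective

lemma Functor.isLeftAdjoint_of_bijective {F : C ⥤ D}
    (h : ∀ Y, ∃ (B : C) (e : F.obj B ⟶ Y), ∀ X, Function.Bijective fun f : X ⟶ B => F.map f ≫ e) :
    F.IsLeftAdjoint := by
  choose B e he using h
  exact (Adjunction.adjunctionOfEquivRight (G_obj := B)
    (fun X Y => (Equiv.ofBijective _ (he Y X)).symm)
    (fun X' X Y f g => by
      simp only [Equiv.symm_apply_eq, Equiv.ofBijective_apply, Functor.map_comp, Category.assoc]
      exact congrArg _ ((Equiv.ofBijective _ (he Y X)).apply_symm_apply g).symm)).isLeftAdjoint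

end CategoryTheory

namespace CategoryTheory.ObjectProperty

variable {T : Type*} [Category T] [HasZeroObject T] [Preadditive T] [HasShift T ℤ]
  [∀ n : ℤ, (shiftFunctor T n).Additive] [Pretriangulated T] (P : ObjectProperty T)

def HasOrthogonalTriangles : Prop :=
  ∀ X : T, ∃ (A B : T) (f : A ⟶ X) (g : X ⟶ B) (h : B ⟶ A⟦(1 : ℤ)⟧),
    Triangle.mk f g h ∈ distTriang T ∧ P A ∧ P.rightOrthogonal B

variable {P}

lemma rightOrthogonal_obj₃_of_isColocal [P.IsStableUnderShift ℤ] {Tr : Triangle T}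
    (hT : Tr ∈ distTriang T) (hf : P.isColocal Tr.mor₁) : P.rightOrthogonal Tr.obj₃ := by
  intro Z u hZ
  -- `hf` at `Z⟦-1⟧`, shifted by `1`, makes `· ≫ Tr.mor₁⟦1⟧'` injective on maps out of `Z`
  have hu : u ≫ Tr.mor₃ = 0 := by
    let e := (shiftFunctorCompIsoId T (-1 : ℤ) 1 (by simp)).app Z
    obtain ⟨v, hv⟩ := (shiftFunctor T (1 : ℤ)).map_surjective (e.hom ≫ u ≫ Tr.mor₃)
    have hv0 : v = 0 := (hf _ (P.le_shift (-1) Z hZ)).injective <|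
      (shiftFunctor T (1 : ℤ)).map_injective (by simp [hv, comp_distTriang_mor_zero₃₁ _ hT])
    rw [← cancel_epi e.hom, ← hv, hv0, Functor.map_zero, comp_zero]
  obtain ⟨w, rfl⟩ := Triangle.coyoneda_exact₃ _ hT u hu
  obtain ⟨w', rfl⟩ := (hf _ hZ).surjective w
  simp [comp_distTriang_mor_zero₁₂ _ hT]

lemma isColocal_mor₁_iff_rightOrthogonal_obj₃ [P.IsStableUnderShift ℤ] {Tr : Triangle T}
    (hT : Tr ∈ distTriang T) : P.isColocal Tr.mor₁ ↔ P.rightOrthogonal Tr.obj₃ := by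
  refine ⟨rightOrthogonal_obj₃_of_isColocal hT, fun hB Z hZ => ?_⟩
  have hZ' : P.rightOrthogonal.trW.isColocal Z := by
    rw [isColocal_trW]
    exact fun Y g hY => hY g hZ
  exact hZ' _ (trW.mk _ hT hB)

variable [P.IsTriangulated]

lemma hasOrthogonalTriangles_of_isLeftAdjoint_ι (hP : P.ι.IsLeftAdjoint) :
    P.HasOrthogonalTriangles := by
  obtain ⟨r, ⟨adj⟩⟩ := hP
  intro X
  obtain ⟨B, g, h, hT⟩ := distinguished_cocone_triangle (adj.counit.app X)
  refine ⟨_, B, _, g, h, hT, (r.obj X).property,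
    (isColocal_mor₁_iff_rightOrthogonal_obj₃ hT).1 fun Z hZ => ?_⟩
  exact isColocal_adj_counit_app adj X Z ⟨⟨Z, hZ⟩, rfl⟩

lemma isLeftAdjoint_ι_of_hasOrthogonalTriangles (hP : P.HasOrthogonalTriangles) :
    P.ι.IsLeftAdjoint := by
  refine Functor.isLeftAdjoint_of_bijective fun X => ?_
  obtain ⟨A, B, f, g, h, hT, hA, hB⟩ := hP X
  exact ⟨⟨A, hA⟩, f, fun Z => ((isColocal_mor₁_iff_rightOrthogonal_obj₃ hT).2 hB _ Z.property).comp
    (P.fullyFaithfulι.map_bijective _ _)⟩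

variable [IsTriangulated T]

lemma isZero_trW_Q_obj {X : T} (hX : P X) : IsZero (P.trW.Q.obj X) :=
  (P.trW.Q.map_isZero (isZero_zero T)).of_iso
    (Localization.isoOfHom P.trW.Q P.trW _ (trW.mk' P (contractible_distinguished X) hX))

lemma isZero_trW_Q_obj_iff [P.IsStableUnderRetracts] (X : T) : IsZero (P.trW.Q.obj X) ↔ P X := by
  refine ⟨fun hX => ?_, isZero_trW_Q_obj⟩
  obtain ⟨Y, s, ⟨C, g, h, hT, hC⟩, hs⟩ := (MorphismProperty.map_eq_iff_postcomp P.trW.Q P.trW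
    (𝟙 X) 0).1 (by simpa using hX.eq_of_src (𝟙 _) 0)
  have hs0 : s = 0 := by simpa using hs
  -- the cone of the zero map `s` is `Y ⊞ X⟦1⟧`, so `X⟦1⟧` is a retract of an object of `P`
  obtain ⟨e, -⟩ := exists_iso_binaryBiproduct_of_distTriang _ (rot_of_distTriang _ hT) (by
    simp only [Triangle.rotate_mor₃, Triangle.mk_mor₁, hs0]
    exact neg_eq_zero.2 (Functor.map_zero _ _ _))
  rw [← P.prop_shift_iff_of_isStableUnderShift X (1 : ℤ)]
  exact IsStableUnderRetracts.of_biprod_right P (P.prop_of_iso e hC)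

lemma rightOrthogonal_obj_of_adjunction {R : P.trW.Localization ⥤ T} (adj : P.trW.Q ⊣ R)
    (Y : P.trW.Localization) : P.rightOrthogonal (R.obj Y) := fun Z _ hZ =>
  (adj.homEquiv Z Y).symm.injective ((isZero_trW_Q_obj hZ).eq_of_src _ _)

lemma isIso_counit_of_adjunction_trW_Q {R : P.trW.Localization ⥤ T} (adj : P.trW.Q ⊣ R) :
    IsIso adj.counit := by
  have := Localization.essSurj P.trW.Q P.trW
  have := fun Y => adj.isIso_counit_app_of_map_bijective fun X =>
    (rightOrthogonal_obj_of_adjunction adj Y).map_bijective_of_isTriangulated P.trW.Q X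
  exact NatIso.isIso_of_isIso_app _

lemma isLeftAdjoint_trW_Q_of_hasOrthogonalTriangles (hP : P.HasOrthogonalTriangles) :
    P.trW.Q.IsLeftAdjoint := by
  have := Localization.essSurj P.trW.Q P.trW
  refine Functor.isLeftAdjoint_of_bijective fun Y => ?_
  obtain ⟨A, B, f, g, h, hT, hA, hB⟩ := hP (P.trW.Q.objPreimage Y)
  have : IsIso (P.trW.Q.map g) := Localization.inverts _ P.trW _ (trW.mk' P hT hA)
  exact ⟨B, inv (P.trW.Q.map g) ≫ (P.trW.Q.objObjPreimageIso Y).hom, fun X =>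
    (asIso _).homToEquiv.bijective.comp (hB.map_bijective_of_isTriangulated P.trW.Q X)⟩

lemma hasOrthogonalTriangles_of_isLeftAdjoint_trW_Q [P.IsStableUnderRetracts]
    (hP : P.trW.Q.IsLeftAdjoint) : P.HasOrthogonalTriangles := by
  obtain ⟨R, ⟨adj⟩⟩ := hP
  have := isIso_counit_of_adjunction_trW_Q adj
  intro X
  have hη : IsIso (P.trW.Q.map (adj.unit.app X)) := by
    rw [IsIso.eq_inv_of_inv_hom_id (adj.left_triangle_components X)]
    infer_instance
  obtain ⟨A, f, h, hT⟩ := distinguished_cocone_triangle₁ (adj.unit.app X)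
  refine ⟨A, _, f, _, h, hT, ?_, rightOrthogonal_obj_of_adjunction adj _⟩
  exact (isZero_trW_Q_obj_iff A).1
    (Triangle.isZero₁_of_isIso₂ _ (P.trW.Q.map_distinguished _ hT) hη)

lemma isLeftAdjoint_ι_iff_isLeftAdjoint_trW_Q [P.IsStableUnderRetracts] :
    P.ι.IsLeftAdjoint ↔ P.trW.Q.IsLeftAdjoint :=
  ⟨fun h => isLeftAdjoint_trW_Q_of_hasOrthogonalTriangles
      (hasOrthogonalTriangles_of_isLeftAdjoint_ι h),
    fun h => isLeftAdjoint_ι_of_hasOrthogonalTriangles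
      (hasOrthogonalTriangles_of_isLeftAdjoint_trW_Q h)⟩

end CategoryTheory.ObjectProperty

namespace Krause

open ObjectProperty

instance Triangulated.Subcategory.isTriangulated {T : Type*} [Category T] [HasZeroObject T]
    [Preadditive T] [HasShift T ℤ] [∀ n : ℤ, (shiftFunctor T n).Additive] [Pretriangulated T]
    (S : Triangulated.Subcategory T) : ObjectProperty.IsTriangulated S.P where
  exists_zero := let ⟨Z, hZ, h⟩ := S.zero'; ⟨Z, hZ, h⟩
  isStableUnderShiftBy n := ⟨fun X => S.shift X n⟩
  ext₂' := S.ext₂'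

lemma isLocalizationSequence_ι_trW_Q_iff {T : Type*} [Category T] [HasZeroObject T]
    [Preadditive T] [HasShift T ℤ] [∀ n : ℤ, (shiftFunctor T n).Additive] [Pretriangulated T]
    [IsTriangulated T] (P : ObjectProperty T) [P.IsTriangulated] [P.IsStableUnderRetracts] :
    IsLocalizationSequence P.ι P.trW.Q ↔ P.ι.IsLeftAdjoint := by
  refine ⟨fun ⟨L⟩ => L.adjF.isLeftAdjoint, fun hP => ?_⟩
  obtain ⟨r, ⟨adjF⟩⟩ := hP.exists_rightAdjoint
  obtain ⟨R, ⟨adjG⟩⟩ := isLeftAdjoint_ι_iff_isLeftAdjoint_trW_Q.1 hP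
  have := isIso_counit_of_adjunction_trW_Q adjG
  exact ⟨{
    Fρ := r
    adjF := adjF
    FρF_iso := (asIso adjF.unit).symm
    Gρ := R
    adjG := adjG
    GGρ_iso := asIso adjG.counit
    zero_iff := fun X => (isZero_trW_Q_obj_iff X).trans
      ⟨fun hX => ⟨⟨X, hX⟩, ⟨Iso.refl _⟩⟩, fun ⟨Y, ⟨e⟩⟩ => P.prop_of_iso e.symm Y.property⟩ }⟩

/-- for a thick subcategory `S` of a triangulated category `T`, the sequence
`S ⥤ T ⥤ T/S` is a localization sequence iff the inclusion has a right adjoint iff the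
Verdier quotient functor has a right adjoint. -/
theorem statement3 {T : Type u} [Category.{v} T] [HasZeroObject T] [Preadditive T]
    [HasShift T ℤ] [∀ n : ℤ, (shiftFunctor T n).Additive] [Pretriangulated T]
    [IsTriangulated T] (S : Triangulated.Subcategory T) [ObjectProperty.IsClosedUnderIsomorphisms S.P]
    (hthick : ∀ (X Y : T) (i : X ⟶ Y) (r : Y ⟶ X), i ≫ r = 𝟙 X → S.P Y → S.P X) :
    (IsLocalizationSequence (ObjectProperty.ι S.P) S.W.Q ↔
      (ObjectProperty.ι S.P).IsLeftAdjoint) ∧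
    ((ObjectProperty.ι S.P).IsLeftAdjoint ↔ (S.W.Q).IsLeftAdjoint) := by
  have : IsStableUnderRetracts S.P := ⟨fun e hY => hthick _ _ e.i e.r e.retract hY⟩
  exact ⟨isLocalizationSequence_ι_trW_Q_iff S.P, isLeftAdjoint_ι_iff_isLeftAdjoint_trW_Q⟩

end Krause
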